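/- arXiv:2408.03529 — 4 statements merged into one kernel-verified Lean document; each statement's English description precedes it below -/
import Mathlib

section
/- Let (U, R, 𝓕) be a CF-approximation space, V ⊆ U and 𝓖 ⊆ 𝓕 ∩ 𝒫(V), and write R|V = R ∩ (V × V). If for every finite K ⊆ U and every F ∈ 𝓕 with K ⊆ R̄(F) there exists G ∈ 𝓖 such that K ⊆ R̄(G) and G ⊆ R̄(F), then (V, R|V, 𝓖) is itself a CF-approximation space (i.e. a CF-approximation subspace of (U, R, 𝓕)). -/
open Set

/-- The upper approximation operator: `upp R A = {x | ∃ y ∈ A, x R y}`. -/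
def upp {U : Type*} (R : U → U → Prop) (A : Set U) : Set U := {x | ∃ y ∈ A, R x y}

/-- `(U, R, 𝓕)` is a CF-approximation space. -/
def IsCFApprox {U : Type*} (R : U → U → Prop) (𝓕 : Set (Set U)) : Prop :=
  Transitive R ∧ 𝓕.Nonempty ∧ (∀ F ∈ 𝓕, F.Finite) ∧
    ∀ F ∈ 𝓕, ∀ K : Set U, K.Finite → K ⊆ upp R F →
      ∃ G ∈ 𝓕, K ⊆ upp R G ∧ G ⊆ upp R F

/-- `E` is a CF-closed set of `(U, R, 𝓕)`. -/
def CFClosed {U : Type*} (R : U → U → Prop) (𝓕 : Set (Set U)) (E : Set U) : Prop :=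
  ∀ K : Set U, K.Finite → K ⊆ E →
    ∃ F ∈ 𝓕, K ⊆ upp R F ∧ upp R F ⊆ E ∧ F ⊆ E

/-- The join saturation `𝓕^♯`: all unions of nonempty finite subfamilies of `𝓕`. -/
def joinSat {U : Type*} (𝓕 : Set (Set U)) : Set (Set U) :=
  {A | ∃ 𝓐 : Set (Set U), 𝓐 ⊆ 𝓕 ∧ 𝓐.Finite ∧ 𝓐.Nonempty ∧ A = ⋃₀ 𝓐}

/-- `S(M, F)`: the set of `G ∈ 𝓕` satisfying (sL-1) and (sL-2). -/
def SFam {U : Type*} (R : U → U → Prop) (𝓕 : Set (Set U)) (M F : Set U) : Set (Set U) :=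
  {G | G ∈ 𝓕 ∧ upp R M ⊆ upp R G ∧ upp R G ⊆ upp R F ∧
    ∀ G' ∈ 𝓕, upp R M ⊆ upp R G' → upp R G' ⊆ upp R F → upp R G ⊆ upp R G'}

/-- `S*(M, F) = {G ∈ S(M, F) | G ⊆ upp R F}`. -/
def SStar {U : Type*} (R : U → U → Prop) (𝓕 : Set (Set U)) (M F : Set U) : Set (Set U) :=
  {G | G ∈ SFam R 𝓕 M F ∧ G ⊆ upp R F}

/-- sL-approximation space. -/
def IsSLApprox {U : Type*} (R : U → U → Prop) (𝓕 : Set (Set U)) : Prop :=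
  IsCFApprox R 𝓕 ∧
    ∀ M ∈ joinSat 𝓕, ∀ F ∈ 𝓕, M ⊆ upp R F → (SFam R 𝓕 M F).Nonempty

/-- L-approximation space. -/
def IsLApprox {U : Type*} (R : U → U → Prop) (𝓕 : Set (Set U)) : Prop :=
  IsCFApprox R 𝓕 ∧
    ∀ M ∈ joinSat 𝓕 ∪ {(∅ : Set U)}, ∀ F ∈ 𝓕, M ⊆ upp R F → (SFam R 𝓕 M F).Nonempty

/-- bc-approximation space. -/
def IsBCApprox {U : Type*} (R : U → U → Prop) (𝓕 : Set (Set U)) : Prop :=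
  IsCFApprox R 𝓕 ∧
    ∀ M ∈ joinSat 𝓕 ∪ {(∅ : Set U)}, ∀ F ∈ 𝓕, M ⊆ upp R F →
      ∃ G ∈ 𝓕, upp R M ⊆ upp R G ∧ upp R G ⊆ upp R F ∧
        ∀ G' ∈ 𝓕, upp R M ⊆ upp R G' → upp R G ⊆ upp R G'

/-- A dcpo: every (nonempty) directed subset has a supremum. -/
def IsDcpo (P : Type*) [PartialOrder P] : Prop :=
  ∀ D : Set P, D.Nonempty → DirectedOn (· ≤ ·) D → ∃ s, IsLUB D s

/-- The way-below relation `x ≪ y`. -/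
def WayBelow {P : Type*} [PartialOrder P] (x y : P) : Prop :=
  ∀ D : Set P, D.Nonempty → DirectedOn (· ≤ ·) D →
    ∀ s, IsLUB D s → y ≤ s → ∃ d ∈ D, x ≤ d

/-- Continuous domain: a dcpo in which for every `x` the set `{z | z ≪ x}` is
directed with supremum `x`. -/
def IsContinuousDomain (P : Type*) [PartialOrder P] : Prop :=
  IsDcpo P ∧ ∀ x : P, {z | WayBelow z x}.Nonempty ∧
    DirectedOn (· ≤ ·) {z | WayBelow z x} ∧ IsLUB {z | WayBelow z x} x

/-- Algebraic domain: a dcpo in which for every `x` the set `↓x ∩ K(P)` is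
directed with supremum `x`. -/
def IsAlgebraicDomain (P : Type*) [PartialOrder P] : Prop :=
  IsDcpo P ∧ ∀ x : P, ({k | k ≤ x ∧ WayBelow k k}).Nonempty ∧
    DirectedOn (· ≤ ·) {k | k ≤ x ∧ WayBelow k k} ∧
    IsLUB {k | k ≤ x ∧ WayBelow k k} x

/-- sL-domain: a continuous domain in which every principal ideal is a
sup-semilattice. -/
def IsSLDomain (P : Type*) [PartialOrder P] : Prop :=
  IsContinuousDomain P ∧ ∀ x a b : P, a ≤ x → b ≤ x →
    ∃ s, s ≤ x ∧ a ≤ s ∧ b ≤ s ∧ ∀ t, t ≤ x → a ≤ t → b ≤ t → s ≤ t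

/-- L-domain: a continuous domain in which every principal ideal is a
complete lattice (every subset of `↓x` has a least upper bound in `↓x`). -/
def IsLDomain (P : Type*) [PartialOrder P] : Prop :=
  IsContinuousDomain P ∧ ∀ (x : P) (A : Set P), (∀ a ∈ A, a ≤ x) →
    ∃ s, s ≤ x ∧ (∀ a ∈ A, a ≤ s) ∧ ∀ t, t ≤ x → (∀ a ∈ A, a ≤ t) → s ≤ t

/-- bc-domain: a continuous domain in which every up-bounded subset has a
supremum. -/
def IsBCDomain (P : Type*) [PartialOrder P] : Prop :=
  IsContinuousDomain P ∧ ∀ A : Set P, (∃ b, ∀ a ∈ A, a ≤ b) → ∃ s, IsLUB A s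

theorem upp_subtype_val {U : Type*} (R : U → U → Prop) {V : Set U} (A : Set V) :
    upp (fun a b : V => R a b) A = Subtype.val ⁻¹' upp R (Subtype.val '' A) := by
  ext x
  simp [upp]

theorem image_val_preimage_val_of_subset {U : Type*} {V G : Set U} (hG : G ⊆ V) :
    Subtype.val '' (Subtype.val ⁻¹' G : Set V) = G :=
  image_preimage_eq_of_subset (by rwa [Subtype.range_coe])

/-- the density condition implies that `(V, R|V, 𝓖)` is itself a
CF-approximation space. -/
theorem stmt0 {U : Type*} (R : U → U → Prop) (𝓕 : Set (Set U))
    (V : Set U) (𝓖 : Set (Set U))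
    (hCF : IsCFApprox R 𝓕) (h𝓖𝓕 : 𝓖 ⊆ 𝓕) (h𝓖V : ∀ G ∈ 𝓖, G ⊆ V)
    (hdense : ∀ K : Set U, K.Finite → ∀ F ∈ 𝓕, K ⊆ upp R F →
      ∃ G ∈ 𝓖, K ⊆ upp R G ∧ G ⊆ upp R F) :
    IsCFApprox (fun a b : V => R a.1 b.1)
      {G' : Set V | Subtype.val '' G' ∈ 𝓖} := by
  obtain ⟨htrans, ⟨F₀, hF₀⟩, hfin, -⟩ := hCF
  have hpull : ∀ G ∈ 𝓖, Subtype.val '' (Subtype.val ⁻¹' G : Set V) ∈ 𝓖 := by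
    intro G hG
    rwa [image_val_preimage_val_of_subset (h𝓖V G hG)]
  refine ⟨fun _ _ _ hab hbc => htrans hab hbc, ?_, ?_, ?_⟩
  · obtain ⟨G, hG, -⟩ := hdense ∅ finite_empty F₀ hF₀ (empty_subset _)
    exact ⟨_, hpull G hG⟩
  · intro F' hF'
    exact (hfin _ (h𝓖𝓕 hF')).of_finite_image Subtype.val_injective.injOn
  · intro F' hF' K' hK' hK'F'
    have hKF : Subtype.val '' K' ⊆ upp R (Subtype.val '' F') := by
      rw [upp_subtype_val] at hK'F'
      exact image_subset_iff.mpr hK'F'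
    obtain ⟨G, hG, hKG, hGF⟩ := hdense _ (hK'.image _) _ (h𝓖𝓕 hF') hKF
    refine ⟨_, hpull G hG, ?_, ?_⟩
    · rw [upp_subtype_val, image_val_preimage_val_of_subset (h𝓖V G hG)]
      exact image_subset_iff.mp hKG
    · rw [upp_subtype_val]
      exact preimage_mono hGF
end

section
/- Let (U, R, 𝓕) be a CF-approximation space, E ∈ 𝔠(U, R, 𝓕), 𝓕_E = {F ∈ 𝓕 : F ⊆ E} and R|E = R ∩ (E × E). Then (E, R|E, 𝓕_E) is a CF-approximation space, and 𝔠(E, R|E, 𝓕_E) = {H ∈ 𝔠(U, R, 𝓕) : H ⊆ E}, i.e. it equals the principal ideal ↓E of (𝔠(U, R, 𝓕), ⊆). -/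
open Set

/-!
Subsets of `E` are identified with subsets of the subtype `E` by image and preimage along the
inclusion, and this identification commutes with the upper approximation. The only point that is
not bookkeeping is that a CF-closed `E` contains `R̄(F)` for every finite `F ⊆ E` (cover `F` by
some `R̄(F₁) ⊆ E` and use transitivity): it keeps every approximating set found in `U` inside `E`.
-/

section

variable {U : Type*} {R : U → U → Prop} {𝓕 : Set (Set U)} {E : Set U}

lemma upp_mono (R : U → U → Prop) {A B : Set U} (h : A ⊆ B) : upp R A ⊆ upp R B := by
  rintro x ⟨y, hy, hxy⟩
  exact ⟨y, h hy, hxy⟩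

lemma upp_upp_subset (hR : Transitive R) (A : Set U) : upp R (upp R A) ⊆ upp R A := by
  rintro x ⟨y, ⟨z, hz, hyz⟩, hxy⟩
  exact ⟨z, hz, hR hxy hyz⟩

lemma CFClosed.upp_subset (hR : Transitive R) (hE : CFClosed R 𝓕 E) {F : Set U}
    (hF : F.Finite) (hFE : F ⊆ E) : upp R F ⊆ E := by
  obtain ⟨F₁, -, hFF₁, hF₁E, -⟩ := hE F hF hFE
  calc upp R F ⊆ upp R (upp R F₁) := upp_mono R hFF₁
    _ ⊆ upp R F₁ := upp_upp_subset hR F₁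
    _ ⊆ E := hF₁E

/-- `R|E` in the paper. -/
def restrictRel (R : U → U → Prop) (E : Set U) : E → E → Prop := fun a b => R a b

/-- `𝓕_E` in the paper, transported to subsets of the subtype `E`. -/
def restrictFamily (𝓕 : Set (Set U)) (E : Set U) : Set (Set E) := {F' | Subtype.val '' F' ∈ 𝓕}

lemma mem_restrictFamily {F' : Set E} : F' ∈ restrictFamily 𝓕 E ↔ Subtype.val '' F' ∈ 𝓕 :=
  Iff.rfl

lemma preimage_mem_restrictFamily {F : Set U} (hF : F ∈ 𝓕) (hFE : F ⊆ E) :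
    Subtype.val ⁻¹' F ∈ restrictFamily 𝓕 E := by
  rwa [mem_restrictFamily, image_preimage_eq_of_subset (by rwa [Subtype.range_coe])]

lemma upp_restrictRel (R : U → U → Prop) (A' : Set E) :
    upp (restrictRel R E) A' = Subtype.val ⁻¹' upp R (Subtype.val '' A') := by
  ext x
  constructor
  · rintro ⟨y, hy, hxy⟩
    exact ⟨y, mem_image_of_mem _ hy, hxy⟩
  · rintro ⟨-, ⟨y, hy, rfl⟩, hxy⟩
    exact ⟨y, hy, hxy⟩

lemma upp_restrictRel_preimage (R : U → U → Prop) {F : Set U} (hFE : F ⊆ E) :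
    upp (restrictRel R E) (Subtype.val ⁻¹' F) = Subtype.val ⁻¹' upp R F := by
  rw [upp_restrictRel, image_preimage_eq_of_subset (by rwa [Subtype.range_coe])]

theorem IsCFApprox.restrict (hCF : IsCFApprox R 𝓕) (hE : CFClosed R 𝓕 E) :
    IsCFApprox (restrictRel R E) (restrictFamily 𝓕 E) := by
  obtain ⟨hR, -, hfin, hinterp⟩ := hCF
  refine ⟨fun a b c hab hbc => hR hab hbc, ?_, ?_, ?_⟩
  · obtain ⟨F, hF, -, -, hFE⟩ := hE ∅ finite_empty (empty_subset E)
    exact ⟨_, preimage_mem_restrictFamily hF hFE⟩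
  · exact fun F' hF' => (hfin _ hF').of_finite_image Subtype.val_injective.injOn
  · intro F' hF' K' hK' hK'F'
    rw [upp_restrictRel, ← image_subset_iff] at hK'F'
    obtain ⟨G, hG, hKG, hGF⟩ := hinterp _ hF' _ (hK'.image _) hK'F'
    have hGE : G ⊆ E := hGF.trans <|
      hE.upp_subset hR (hfin _ hF') (Subtype.coe_image_subset E F')
    refine ⟨_, preimage_mem_restrictFamily hG hGE, ?_, ?_⟩
    · rwa [upp_restrictRel_preimage R hGE, ← image_subset_iff]
    · rw [upp_restrictRel]
      exact preimage_mono hGF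

theorem cfClosed_restrict_preimage_iff (hR : Transitive R) (hfin : ∀ F ∈ 𝓕, F.Finite)
    (hE : CFClosed R 𝓕 E) {H : Set U} (hHE : H ⊆ E) :
    CFClosed (restrictRel R E) (restrictFamily 𝓕 E) (Subtype.val ⁻¹' H) ↔ CFClosed R 𝓕 H := by
  have hHrange : H ⊆ range (Subtype.val : E → U) := by rwa [Subtype.range_coe]
  constructor
  · intro hH K hK hKH
    have hKrange : K ⊆ range (Subtype.val : E → U) := hKH.trans hHrange
    obtain ⟨F', hF', hKF', hF'H, hF'H'⟩ :=
      hH _ (hK.preimage Subtype.val_injective.injOn) (preimage_mono hKH)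
    have hFrange : upp R (Subtype.val '' F') ⊆ range (Subtype.val : E → U) := by
      rw [Subtype.range_coe]
      exact hE.upp_subset hR (hfin _ hF') (Subtype.coe_image_subset E F')
    rw [upp_restrictRel] at hKF' hF'H
    exact ⟨_, hF', (preimage_subset_preimage_iff hKrange).mp hKF',
      (preimage_subset_preimage_iff hFrange).mp hF'H, image_subset_iff.mpr hF'H'⟩
  · intro hH K' hK' hK'H
    rw [← image_subset_iff] at hK'H
    obtain ⟨F, hF, hKF, hFH, hFH'⟩ := hH _ (hK'.image _) hK'H
    have hFE : F ⊆ E := hFH'.trans hHE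
    refine ⟨_, preimage_mem_restrictFamily hF hFE, ?_, ?_, preimage_mono hFH'⟩
    · rwa [upp_restrictRel_preimage R hFE, ← image_subset_iff]
    · rw [upp_restrictRel_preimage R hFE]
      exact preimage_mono hFH

end

/-- for a CF-closed set `E`, the induced principal subspace
`(E, R|E, 𝓕_E)` is a CF-approximation space whose CF-closed sets are exactly
the CF-closed sets of `(U, R, 𝓕)` contained in `E`. -/
theorem stmt3 {U : Type*} (R : U → U → Prop) (𝓕 : Set (Set U))
    (hCF : IsCFApprox R 𝓕) (E : Set U) (hE : CFClosed R 𝓕 E) :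
    IsCFApprox (fun a b : E => R a.1 b.1)
      {F' : Set E | Subtype.val '' F' ∈ 𝓕} ∧
    {H' : Set E | CFClosed (fun a b : E => R a.1 b.1)
        {F' : Set E | Subtype.val '' F' ∈ 𝓕} H'}
      = (fun H : Set U => (Subtype.val ⁻¹' H : Set E)) ''
          {H | CFClosed R 𝓕 H ∧ H ⊆ E} := by
  refine ⟨hCF.restrict hE, ?_⟩
  ext H'
  constructor
  · intro hH'
    have hH'E : Subtype.val '' H' ⊆ E := Subtype.coe_image_subset E H'
    refine ⟨Subtype.val '' H', ⟨?_, hH'E⟩, preimage_image_eq H' Subtype.val_injective⟩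
    rw [← cfClosed_restrict_preimage_iff hCF.1 hCF.2.2.1 hE hH'E,
      preimage_image_eq H' Subtype.val_injective]
    exact hH'
  · rintro ⟨H, ⟨hH, hHE⟩, rfl⟩
    exact (cfClosed_restrict_preimage_iff hCF.1 hCF.2.2.1 hE hHE).mpr hH
end

section
/- Let (U, R, 𝓕) be an sL-approximation space, E ∈ 𝔠(U, R, 𝓕), F₁, F₂ ∈ 𝓕 with F₁ ∪ F₂ ⊆ E, and M ∈ 𝓕^♯ with M ⊆ R̄(F₁) ∩ R̄(F₂). Then S(M, F₁) = S(M, F₂). -/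
open Set

/-!
Choose `F ∈ 𝓕` with `F₁ ∪ F₂ ⊆ upp R F`, which exists because `E` is CF-closed. Every member
of `S(M, F₁)` or `S(M, F₂)` then has the same upper approximation as any member of `S(M, F)`,
and membership in `S(M, ·)` is determined by the upper approximation.
-/

theorem upp_subset_of_subset_upp {U : Type*} {R : U → U → Prop} (hT : Transitive R)
    {A B : Set U} (h : A ⊆ upp R B) : upp R A ⊆ upp R B := by
  rintro x ⟨y, hyA, hxy⟩
  obtain ⟨z, hzB, hyz⟩ := h hyA
  exact ⟨z, hzB, hT hxy hyz⟩

theorem finite_of_mem_joinSat {U : Type*} {𝓕 : Set (Set U)} (h𝓕 : ∀ F ∈ 𝓕, F.Finite)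
    {M : Set U} (hM : M ∈ joinSat 𝓕) : M.Finite := by
  obtain ⟨𝓐, h𝓐𝓕, h𝓐, -, rfl⟩ := hM
  exact h𝓐.sUnion fun A hA => h𝓕 A (h𝓐𝓕 hA)

theorem mem_SFam_of_upp_eq {U : Type*} {R : U → U → Prop} {𝓕 : Set (Set U)}
    {M F F' G G' : Set U} (hG : G ∈ SFam R 𝓕 M F) (hG' : G' ∈ SFam R 𝓕 M F')
    (h : upp R G = upp R G') : G ∈ SFam R 𝓕 M F' := by
  obtain ⟨hG𝓕, hMG, -, -⟩ := hG
  obtain ⟨-, -, hG'F', hG'min⟩ := hG'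
  exact ⟨hG𝓕, hMG, h ▸ hG'F', fun K hK hMK hKF' => h ▸ hG'min K hK hMK hKF'⟩

namespace IsSLApprox

variable {U : Type*} {R : U → U → Prop} {𝓕 : Set (Set U)} {M : Set U}

theorem upp_eq_of_mem_SFam (hSL : IsSLApprox R 𝓕) (hM : M ∈ joinSat 𝓕) {F F' G G' : Set U}
    (hF' : F' ∈ 𝓕) (hMF' : M ⊆ upp R F') (hF'F : upp R F' ⊆ upp R F)
    (hG : G ∈ SFam R 𝓕 M F) (hG' : G' ∈ SFam R 𝓕 M F') : upp R G' = upp R G := by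
  obtain ⟨⟨hT, -, hfin, hinterp⟩, hS⟩ := hSL
  obtain ⟨hG𝓕, hMG, -, hGmin⟩ := hG
  obtain ⟨hG'𝓕, hMG', hG'F', hG'min⟩ := hG'
  -- `G` is not known to compete in `S(M, F')`, so compare both `G` and `G'` with a member of
  -- `S(M, H)` for some `H ∈ 𝓕` interpolated between `M` and `F'`.
  obtain ⟨H, hH, hMH, hHsub⟩ := hinterp F' hF' M (finite_of_mem_joinSat hfin hM) hMF'
  have hHF' : upp R H ⊆ upp R F' := upp_subset_of_subset_upp hT hHsub
  obtain ⟨K, hK𝓕, hMK, hKH, hKmin⟩ := hS M hM H hH hMH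
  have hGH : upp R G ⊆ upp R H :=
    hGmin H hH (upp_subset_of_subset_upp hT hMH) (hHF'.trans hF'F)
  have hKG : upp R K ⊆ upp R G := hKmin G hG𝓕 hMG hGH
  have hG'K : upp R G' ⊆ upp R K := hG'min K hK𝓕 hMK (hKH.trans hHF')
  exact (hG'K.trans hKG).antisymm (hGmin G' hG'𝓕 hMG' (hG'F'.trans hF'F))

theorem SFam_subset_of_upp_subset (hSL : IsSLApprox R 𝓕) (hM : M ∈ joinSat 𝓕)
    {F F₁ F₂ : Set U} (hF : F ∈ 𝓕) (hF₁ : F₁ ∈ 𝓕) (hF₂ : F₂ ∈ 𝓕)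
    (hF₁F : upp R F₁ ⊆ upp R F) (hF₂F : upp R F₂ ⊆ upp R F)
    (hMF₁ : M ⊆ upp R F₁) (hMF₂ : M ⊆ upp R F₂) : SFam R 𝓕 M F₁ ⊆ SFam R 𝓕 M F₂ := by
  intro G₁ hG₁
  obtain ⟨G, hG⟩ := hSL.2 M hM F hF (hMF₁.trans hF₁F)
  obtain ⟨G₂, hG₂⟩ := hSL.2 M hM F₂ hF₂ hMF₂
  refine mem_SFam_of_upp_eq hG₁ hG₂ ?_
  rw [hSL.upp_eq_of_mem_SFam hM hF₁ hMF₁ hF₁F hG hG₁,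
    hSL.upp_eq_of_mem_SFam hM hF₂ hMF₂ hF₂F hG hG₂]

end IsSLApprox

/-- in an sL-approximation space, if `F₁ ∪ F₂ ⊆ E` for a CF-closed
set `E` and `M ∈ 𝓕^♯` with `M ⊆ upp R F₁ ∩ upp R F₂`, then
`S(M, F₁) = S(M, F₂)`. -/
theorem stmt9 {U : Type*} (R : U → U → Prop) (𝓕 : Set (Set U))
    (hSL : IsSLApprox R 𝓕) (E : Set U) (hE : CFClosed R 𝓕 E)
    (F₁ F₂ : Set U) (hF₁ : F₁ ∈ 𝓕) (hF₂ : F₂ ∈ 𝓕) (hFE : F₁ ∪ F₂ ⊆ E)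
    (M : Set U) (hM : M ∈ joinSat 𝓕) (hMF : M ⊆ upp R F₁ ∩ upp R F₂) :
    SFam R 𝓕 M F₁ = SFam R 𝓕 M F₂ := by
  obtain ⟨hT, -, hfin, -⟩ := hSL.1
  obtain ⟨F, hF, hF₁₂F, -, -⟩ := hE (F₁ ∪ F₂) ((hfin F₁ hF₁).union (hfin F₂ hF₂)) hFE
  have hF₁F : upp R F₁ ⊆ upp R F :=
    upp_subset_of_subset_upp hT (subset_union_left.trans hF₁₂F)
  have hF₂F : upp R F₂ ⊆ upp R F :=
    upp_subset_of_subset_upp hT (subset_union_right.trans hF₁₂F)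
  have hMF₁ : M ⊆ upp R F₁ := hMF.trans inter_subset_left
  have hMF₂ : M ⊆ upp R F₂ := hMF.trans inter_subset_right
  exact (hSL.SFam_subset_of_upp_subset hM hF hF₁ hF₂ hF₁F hF₂F hMF₁ hMF₂).antisymm
    (hSL.SFam_subset_of_upp_subset hM hF hF₂ hF₁ hF₂F hF₁F hMF₂ hMF₁)
end

section
/- Let (U, R, 𝓕) be a topological sL-approximation space and let (V, R|V, 𝓖) be a dense CF-approximation subspace of (U, R, 𝓕). Then (V, R|V, 𝓖) is an sL-approximation space. -/
/-!
For a preorder `R`, `upp R A ⊆ upp R B` holds iff `A ⊆ upp R B`, and this comparison is the same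
whether computed in `V` or, after taking images, in `U`. Given `M`, `F` in the subspace, the
ambient space supplies a least `H ∈ 𝓕` between them; density applied to `H ⊆ upp R H` yields
`G ∈ 𝓖` with `upp R G = upp R H`, and `G`, read in `V`, is least among the candidates from
`𝓖 ⊆ 𝓕` as well.
-/

open Set

section Upp

variable {U V : Type*} {R : U → U → Prop}

theorem upp_subset_upp_of_subset (htrans : Transitive R) {A B : Set U} (h : A ⊆ upp R B) :
    upp R A ⊆ upp R B := by
  rintro x ⟨y, hy, hxy⟩
  obtain ⟨z, hz, hyz⟩ := h hy
  exact ⟨z, hz, htrans hxy hyz⟩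

theorem subset_upp (hrefl : Reflexive R) (A : Set U) : A ⊆ upp R A :=
  fun x hx => ⟨x, hx, hrefl x⟩

theorem upp_subset_upp_iff (hrefl : Reflexive R) (htrans : Transitive R) {A B : Set U} :
    upp R A ⊆ upp R B ↔ A ⊆ upp R B :=
  ⟨(subset_upp hrefl A).trans, upp_subset_upp_of_subset htrans⟩

theorem upp_comap (f : V → U) (A : Set V) :
    upp (fun a b => R (f a) (f b)) A = f ⁻¹' upp R (f '' A) := by
  ext x
  simp [upp]

theorem image_subset_upp_image_iff (f : V → U) {A B : Set V} :
    f '' A ⊆ upp R (f '' B) ↔ A ⊆ upp (fun a b => R (f a) (f b)) B := by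
  rw [image_subset_iff, upp_comap f]

theorem upp_comap_subset_upp_comap_iff (f : V → U) (hrefl : Reflexive R)
    (htrans : Transitive R) {A B : Set V} :
    upp (fun a b => R (f a) (f b)) A ⊆ upp (fun a b => R (f a) (f b)) B ↔
      upp R (f '' A) ⊆ upp R (f '' B) := by
  rw [upp_subset_upp_iff (R := fun a b => R (f a) (f b)) (fun a => hrefl (f a))
      (fun _ _ _ hab hbc => htrans hab hbc),
    upp_subset_upp_iff hrefl htrans, image_subset_upp_image_iff]

end Upp

section SFam

variable {U V : Type*} {R : U → U → Prop} {𝓕 : Set (Set U)}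

theorem image_mem_joinSat (f : V → U) {𝓖 : Set (Set V)} (h𝓖 : ∀ G ∈ 𝓖, f '' G ∈ 𝓕)
    {M : Set V} (hM : M ∈ joinSat 𝓖) : f '' M ∈ joinSat 𝓕 := by
  obtain ⟨𝓐, h𝓐𝓖, h𝓐fin, h𝓐ne, rfl⟩ := hM
  refine ⟨image f '' 𝓐, ?_, h𝓐fin.image _, h𝓐ne.image _, image_sUnion⟩
  rintro _ ⟨A, hA, rfl⟩
  exact h𝓖 A (h𝓐𝓖 hA)

theorem mem_sFam_of_upp_eq {M F G H : Set U} (hH : H ∈ SFam R 𝓕 M F) (hG : G ∈ 𝓕)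
    (hGH : upp R G = upp R H) : G ∈ SFam R 𝓕 M F := by
  obtain ⟨-, hMH, hHF, hmin⟩ := hH
  exact ⟨hG, hGH ▸ hMH, hGH ▸ hHF, hGH ▸ hmin⟩

theorem mem_sFam_comap (f : V → U) (hrefl : Reflexive R) (htrans : Transitive R)
    {𝓖 : Set (Set V)} (h𝓖 : ∀ G ∈ 𝓖, f '' G ∈ 𝓕) {M F G : Set V} (hG : G ∈ 𝓖)
    (hGS : f '' G ∈ SFam R 𝓕 (f '' M) (f '' F)) :
    G ∈ SFam (fun a b => R (f a) (f b)) 𝓖 M F := by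
  obtain ⟨-, hMG, hGF, hmin⟩ := hGS
  simp only [SFam, mem_setOf_eq, upp_comap_subset_upp_comap_iff f hrefl htrans]
  exact ⟨hG, hMG, hGF, fun G' hG' => hmin _ (h𝓖 G' hG')⟩

end SFam

section DenseSubspace

variable {U : Type*} {R : U → U → Prop} {𝓕 : Set (Set U)} {V : Set U} {𝓖 : Set (Set U)}

theorem image_val_preimage_val_of_mem (h𝓖V : ∀ G ∈ 𝓖, G ⊆ V) {G : Set U} (hG : G ∈ 𝓖) :
    Subtype.val '' (Subtype.val ⁻¹' G : Set V) = G :=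
  image_preimage_eq_of_subset (by rw [Subtype.range_coe]; exact h𝓖V G hG)

theorem preimage_val_mem_of_mem (h𝓖V : ∀ G ∈ 𝓖, G ⊆ V) {G : Set U} (hG : G ∈ 𝓖) :
    (Subtype.val ⁻¹' G : Set V) ∈ {G' : Set V | Subtype.val '' G' ∈ 𝓖} := by
  rwa [mem_setOf_eq, image_val_preimage_val_of_mem h𝓖V hG]

theorem exists_mem_upp_eq_of_dense (htrans : Transitive R) (hrefl : Reflexive R)
    (hdense : ∀ K : Set U, K.Finite → ∀ F ∈ 𝓕, K ⊆ upp R F →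
      ∃ G ∈ 𝓖, K ⊆ upp R G ∧ G ⊆ upp R F)
    {H : Set U} (hH : H ∈ 𝓕) (hHfin : H.Finite) : ∃ G ∈ 𝓖, upp R G = upp R H := by
  obtain ⟨G, hG, hHG, hGH⟩ := hdense H hHfin H hH (subset_upp hrefl H)
  exact ⟨G, hG,
    (upp_subset_upp_of_subset htrans hGH).antisymm (upp_subset_upp_of_subset htrans hHG)⟩

theorem isCFApprox_subspace_of_dense (hCF : IsCFApprox R 𝓕) (h𝓖𝓕 : 𝓖 ⊆ 𝓕)
    (h𝓖V : ∀ G ∈ 𝓖, G ⊆ V)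
    (hdense : ∀ K : Set U, K.Finite → ∀ F ∈ 𝓕, K ⊆ upp R F →
      ∃ G ∈ 𝓖, K ⊆ upp R G ∧ G ⊆ upp R F) :
    IsCFApprox (fun a b : V => R a.1 b.1) {G' : Set V | Subtype.val '' G' ∈ 𝓖} := by
  obtain ⟨htrans, ⟨F₀, hF₀⟩, hfin, -⟩ := hCF
  refine ⟨fun _ _ _ hab hbc => htrans hab hbc, ?_, ?_, ?_⟩
  · obtain ⟨G, hG, -⟩ := hdense ∅ finite_empty F₀ hF₀ (empty_subset _)
    exact ⟨_, preimage_val_mem_of_mem h𝓖V hG⟩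
  · exact fun G' hG' => (hfin _ (h𝓖𝓕 hG')).of_finite_image Subtype.val_injective.injOn
  · intro F' hF' K' hK'fin hK'F'
    obtain ⟨G, hG, hKG, hGF⟩ := hdense _ (hK'fin.image Subtype.val) _ (h𝓖𝓕 hF')
      ((image_subset_upp_image_iff Subtype.val).2 hK'F')
    rw [← image_val_preimage_val_of_mem h𝓖V hG] at hKG hGF
    exact ⟨_, preimage_val_mem_of_mem h𝓖V hG, (image_subset_upp_image_iff Subtype.val).1 hKG,
      (image_subset_upp_image_iff Subtype.val).1 hGF⟩

end DenseSubspace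

/-- a dense CF-approximation subspace of a topological
sL-approximation space is an sL-approximation space. -/
theorem stmt11 {U : Type*} (R : U → U → Prop) (𝓕 : Set (Set U))
    (V : Set U) (𝓖 : Set (Set U))
    (hSL : IsSLApprox R 𝓕) (hrefl : Reflexive R)
    (h𝓖𝓕 : 𝓖 ⊆ 𝓕) (h𝓖V : ∀ G ∈ 𝓖, G ⊆ V)
    (hdense : ∀ K : Set U, K.Finite → ∀ F ∈ 𝓕, K ⊆ upp R F →
      ∃ G ∈ 𝓖, K ⊆ upp R G ∧ G ⊆ upp R F) :
    IsSLApprox (fun a b : V => R a.1 b.1)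
      {G' : Set V | Subtype.val '' G' ∈ 𝓖} := by
  obtain ⟨hCF, hsL⟩ := hSL
  refine ⟨isCFApprox_subspace_of_dense hCF h𝓖𝓕 h𝓖V hdense, fun M' hM' F' hF' hM'F' => ?_⟩
  obtain ⟨htrans, -, hfin, -⟩ := hCF
  have h𝓖'𝓕 : ∀ G' ∈ {G' : Set V | Subtype.val '' G' ∈ 𝓖}, Subtype.val '' G' ∈ 𝓕 :=
    fun _ hG' => h𝓖𝓕 hG'
  obtain ⟨H, hH⟩ := hsL _ (image_mem_joinSat Subtype.val h𝓖'𝓕 hM') _ (h𝓖𝓕 hF')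
    ((image_subset_upp_image_iff Subtype.val).2 hM'F')
  obtain ⟨G, hG, hGH⟩ := exists_mem_upp_eq_of_dense htrans hrefl hdense hH.1 (hfin H hH.1)
  refine ⟨_, mem_sFam_comap Subtype.val hrefl htrans h𝓖'𝓕 (preimage_val_mem_of_mem h𝓖V hG) ?_⟩
  rw [image_val_preimage_val_of_mem h𝓖V hG]
  exact mem_sFam_of_upp_eq hH (h𝓖𝓕 hG) hGH
end
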